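/- Witnesses for NPT states: Let ρ be a density matrix on ℂ^{d_A} ⊗ ℂ^{d_B} and suppose ψ is a unit eigenvector of ρ^{T_B} with eigenvalue λ < 0, i.e. ρ^{T_B}·ψ = λψ. Then the Hermitian matrix W = (ψψ*)^{T_B} satisfies: (i) Re tr(Wρ) = λ < 0, and (ii) Re tr(Wσ) ≥ 0 for every separable density matrix σ on ℂ^{d_A} ⊗ ℂ^{d_B}. Hence W is an entanglement witness detecting ρ. -/
import Mathlib


open scoped BigOperators ComplexOrder

/-- The rank-one matrix `x x*`, with entries `(x x*)_{ij} = x i * conj (x j)`. -/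
def vecProjector {ι : Type*} (x : ι → ℂ) : Matrix ι ι ℂ :=
  fun u v => x u * (starRingEnd ℂ) (x v)

/-- A density matrix on `ℂ^{d_A} ⊗ ℂ^{d_B}` is separable if it is a finite convex combination
of Kronecker products of rank-one projectors onto unit vectors. -/
def SeparableState {dA dB : ℕ}
    (ρ : Matrix (Fin dA × Fin dB) (Fin dA × Fin dB) ℂ) : Prop :=
  ∃ (K : ℕ) (p : Fin K → ℝ) (x : Fin K → Fin dA → ℂ) (y : Fin K → Fin dB → ℂ),
    (∀ k, 0 ≤ p k) ∧ (∑ k, p k = 1) ∧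
    (∀ k, ∑ a, Complex.normSq (x k a) = 1) ∧
    (∀ k, ∑ b, Complex.normSq (y k b) = 1) ∧
    ρ = ∑ k, (p k : ℂ) •
      Matrix.kroneckerMap (· * ·) (vecProjector (x k)) (vecProjector (y k))

/-- Partial transposition with respect to the second factor:
`(ρ^{T_B})_{(i,μ),(j,ν)} = ρ_{(i,ν),(j,μ)}`. -/
def partialTransposeB {dA dB : ℕ}
    (ρ : Matrix (Fin dA × Fin dB) (Fin dA × Fin dB) ℂ) :
    Matrix (Fin dA × Fin dB) (Fin dA × Fin dB) ℂ :=
  fun p q => ρ (p.1, q.2) (q.1, p.2)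


def flipE (dA dB : ℕ) :
    ((Fin dA × Fin dB) × (Fin dA × Fin dB)) ≃ ((Fin dA × Fin dB) × (Fin dA × Fin dB)) where
  toFun pq := ((pq.2.1, pq.1.2), (pq.1.1, pq.2.2))
  invFun pq := ((pq.2.1, pq.1.2), (pq.1.1, pq.2.2))
  left_inv := fun ⟨⟨_,_⟩,⟨_,_⟩⟩ => rfl
  right_inv := fun ⟨⟨_,_⟩,⟨_,_⟩⟩ => rfl

lemma trace_W_mul {dA dB : ℕ} (ψ : Fin dA × Fin dB → ℂ)
    (M : Matrix (Fin dA × Fin dB) (Fin dA × Fin dB) ℂ) :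
    (partialTransposeB (vecProjector ψ) * M).trace
      = ∑ v, (starRingEnd ℂ) (ψ v) * ((partialTransposeB M).mulVec ψ) v := by
  simp only [Matrix.trace, Matrix.diag, Matrix.mul_apply, Matrix.mulVec, dotProduct,
    partialTransposeB, vecProjector, Finset.mul_sum]
  rw [← Fintype.sum_prod_type', ← Fintype.sum_prod_type']
  exact Fintype.sum_equiv (flipE dA dB) _ _ (by rintro ⟨⟨a,b⟩,⟨c,d⟩⟩; simp [flipE]; ring)

lemma trace_W_kron {dA dB : ℕ} (ψ : Fin dA × Fin dB → ℂ)
    (x : Fin dA → ℂ) (y : Fin dB → ℂ) :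
    (partialTransposeB (vecProjector ψ) *
        Matrix.kroneckerMap (· * ·) (vecProjector x) (vecProjector y)).trace
      = (Complex.normSq (∑ u : Fin dA × Fin dB, ψ u * (starRingEnd ℂ) (x u.1) * y u.2) : ℂ) := by
  rw [trace_W_mul, Complex.normSq_eq_conj_mul_self, map_sum, Finset.sum_mul_sum]
  simp only [Matrix.mulVec, dotProduct, partialTransposeB, Matrix.kroneckerMap_apply,
    vecProjector, Finset.mul_sum]
  refine Finset.sum_congr rfl fun v _ => Finset.sum_congr rfl fun u _ => ?_
  simp only [map_mul, Complex.conj_conj]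
  ring

/-- **Witnesses for NPT states.** If `ψ` is a unit eigenvector of `ρ^{T_B}` with a negative
eigenvalue `λ`, then `W = (ψψ*)^{T_B}` is a Hermitian entanglement witness detecting `ρ`:
`Re tr(Wρ) = λ < 0` while `Re tr(Wσ) ≥ 0` for every separable density matrix `σ`. -/
theorem npt_state_witness (dA dB : ℕ)
    (ρ : Matrix (Fin dA × Fin dB) (Fin dA × Fin dB) ℂ)
    (hpsd : ρ.PosSemidef) (htr : ρ.trace = 1)
    (ψ : Fin dA × Fin dB → ℂ)
    (hψ : ∑ p : Fin dA × Fin dB, Complex.normSq (ψ p) = 1)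
    (lam : ℝ) (hlam : lam < 0)
    (heig : (partialTransposeB ρ).mulVec ψ = (lam : ℂ) • ψ) :
    (partialTransposeB (vecProjector ψ)).IsHermitian ∧
    ((partialTransposeB (vecProjector ψ) * ρ).trace).re = lam ∧
    ∀ σ : Matrix (Fin dA × Fin dB) (Fin dA × Fin dB) ℂ,
      σ.PosSemidef → σ.trace = 1 → SeparableState σ →
        0 ≤ ((partialTransposeB (vecProjector ψ) * σ).trace).re := by
  refine ⟨?_, ?_, ?_⟩
  · ext p q
    simp [Matrix.conjTranspose_apply, partialTransposeB, vecProjector, mul_comm]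
  · have h2 : (partialTransposeB (vecProjector ψ) * ρ).trace = (lam : ℂ) := by
      rw [trace_W_mul, heig]
      have : ∀ v, (starRingEnd ℂ) (ψ v) * ((lam : ℂ) • ψ) v
          = (lam : ℂ) * (Complex.normSq (ψ v) : ℂ) := by
        intro v
        simp only [Pi.smul_apply, smul_eq_mul, Complex.normSq_eq_conj_mul_self]
        ring
      rw [Finset.sum_congr rfl fun v _ => this v, ← Finset.mul_sum]
      norm_cast
      rw [hψ, mul_one]
    rw [h2, Complex.ofReal_re]
  · rintro σ _ _ ⟨K, p, x, y, hp, -, -, -, rfl⟩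
    rw [Finset.mul_sum]
    simp only [Matrix.mul_smul, Matrix.trace_sum, Matrix.trace_smul, trace_W_kron]
    rw [Complex.re_sum]
    apply Finset.sum_nonneg
    intro k _
    simp only [smul_eq_mul, ← Complex.ofReal_mul, Complex.ofReal_re]
    exact mul_nonneg (hp k) (Complex.normSq_nonneg _)
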